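/- arXiv:1305.0919 — 5 statements merged into one kernel-verified Lean document; each statement's English description precedes it below -/
import Mathlib

section
/- Let k₀ > 0, let a ∈ ℝ³ with a₃ = 0 and β ∈ ℂ satisfy a·a + β² = k₀², and set d = a − β e₃ ∈ ℂ³. Let p, Ẽ ∈ ℂ³ with d·Ẽ = 0, and set p_m = p − ((d·p)/k₀²) d. Then ((Ẽ × e₃) × d − e₃ × ((−d) × Ẽ)) · p_m = 2β (Ẽ·p). (This is the final vector-algebra identity in the proof of the mixed reciprocity relation.) -/
/-!
Expanding the two vector triple products turns the bracket into `2β Ẽ + Ẽ₃ d`, because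
`d·e₃ = -β` and `d·Ẽ = 0`. Since `d·d = a·a + β² = k₀²`, the vector `p_m` is the component of `p`
orthogonal to `d`: it pairs to zero with `d`, and with `Ẽ` exactly as `p` does.
-/

noncomputable section

open MeasureTheory Real Set

/-- Points of `ℝ³`. -/
abbrev V3 := Fin 3 → ℝ
/-- Vectors of `ℂ³`. -/
abbrev C3 := Fin 3 → ℂ

/-- The bilinear (unconjugated) dot product on `ℂ³`. -/
def cdot (a b : C3) : ℂ := a 0 * b 0 + a 1 * b 1 + a 2 * b 2

/-- The Euclidean dot product on `ℝ³`. -/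
def rdot (a x : V3) : ℝ := a 0 * x 0 + a 1 * x 1 + a 2 * x 2

/-- The cross product, extended bilinearly to `ℂ³`. -/
def cross (a b : C3) : C3 :=
  ![a 1 * b 2 - a 2 * b 1, a 2 * b 0 - a 0 * b 2, a 0 * b 1 - a 1 * b 0]

/-- Inclusion `ℝ³ ⊆ ℂ³`. -/
def toC3 (v : V3) : C3 := fun i => (v i : ℂ)

/-- Standard basis of `ℝ³`. -/
def stdR (j : Fin 3) : V3 := fun k => if k = j then 1 else 0

/-- Standard basis of `ℂ³`. -/
def stdC (j : Fin 3) : C3 := fun k => if k = j then 1 else 0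

/-- The Euclidean norm on `ℝ³`. -/
def enorm3 (v : V3) : ℝ := Real.sqrt (rdot v v)

/-- The squared Hermitian norm on `ℂ³`. -/
def hnormSq (a : C3) : ℝ := Complex.normSq (a 0) + Complex.normSq (a 1) + Complex.normSq (a 2)

/-- Partial derivative `∂_j F` of a scalar field. -/
def pd (j : Fin 3) (F : V3 → ℂ) (x : V3) : ℂ := fderiv ℝ F x (stdR j)

/-- curl of a `ℂ³`-valued field on `ℝ³`. -/
def curl3 (E : V3 → C3) (x : V3) : C3 :=
  ![pd 1 (fun y => E y 2) x - pd 2 (fun y => E y 1) x,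
    pd 2 (fun y => E y 0) x - pd 0 (fun y => E y 2) x,
    pd 0 (fun y => E y 1) x - pd 1 (fun y => E y 0) x]

/-- divergence of a `ℂ³`-valued field on `ℝ³`. -/
def div3 (E : V3 → C3) (x : V3) : ℂ :=
  pd 0 (fun y => E y 0) x + pd 1 (fun y => E y 1) x + pd 2 (fun y => E y 2) x

/-- Laplacian of a scalar field on `ℝ³`. -/
def lap3 (F : V3 → ℂ) (x : V3) : ℂ :=
  pd 0 (pd 0 F) x + pd 1 (pd 1 F) x + pd 2 (pd 2 F) x

/-- `α_n = (α₁+n₁, α₂+n₂, 0)`. -/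
def alphaN (α : ℝ × ℝ) (n : ℤ × ℤ) : V3 := ![α.1 + n.1, α.2 + n.2, 0]

/-- `β_n = (k₀²-|α_n|²)^{1/2}` if `|α_n|² ≤ k₀²`, and `i(|α_n|²-k₀²)^{1/2}` otherwise. -/
def betaN (k₀ : ℝ) (α : ℝ × ℝ) (n : ℤ × ℤ) : ℂ :=
  if (α.1 + n.1) ^ 2 + (α.2 + n.2) ^ 2 ≤ k₀ ^ 2 then
    ((Real.sqrt (k₀ ^ 2 - ((α.1 + n.1) ^ 2 + (α.2 + n.2) ^ 2)) : ℝ) : ℂ)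
  else Complex.I * ((Real.sqrt ((α.1 + n.1) ^ 2 + (α.2 + n.2) ^ 2 - k₀ ^ 2) : ℝ) : ℂ)

/-- `E` is α-quasi-periodic on the set `D`. -/
def QPOn (α : ℝ × ℝ) (D : Set V3) (E : V3 → C3) : Prop :=
  ∀ x ∈ D,
    E (x + (2 * π) • stdR 0) = Complex.exp (2 * π * α.1 * Complex.I) • E x ∧
    E (x + (2 * π) • stdR 1) = Complex.exp (2 * π * α.2 * Complex.I) • E x

/-- A function on `ℝ²` is `2π`-periodic in each variable. -/
def Per2 (g : ℝ × ℝ → ℝ) : Prop :=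
  ∀ x' : ℝ × ℝ, g (x'.1 + 2 * π, x'.2) = g x' ∧ g (x'.1, x'.2 + 2 * π) = g x'

/-- A subset of `ℝ²` is `2π`-biperiodic. -/
def PerSet (S : Set (ℝ × ℝ)) : Prop :=
  ∀ x' : ℝ × ℝ, (x' ∈ S ↔ (x'.1 + 2 * π, x'.2) ∈ S) ∧ (x' ∈ S ↔ (x'.1, x'.2 + 2 * π) ∈ S)

/-- Partial derivatives of a function on `ℝ²`. -/
def pdR (j : Fin 2) (φ : ℝ × ℝ → ℝ) (x' : ℝ × ℝ) : ℝ :=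
  fderiv ℝ φ x' (if j = 0 then (1, 0) else (0, 1))

/-- Area element `√(1+|∇φ|²)` of the graph of `φ`. -/
def areaEl (φ : ℝ × ℝ → ℝ) (x' : ℝ × ℝ) : ℝ :=
  Real.sqrt (1 + (pdR 0 φ x') ^ 2 + (pdR 1 φ x') ^ 2)

/-- Upward unit normal of the graph of `φ`. -/
def nvec (φ : ℝ × ℝ → ℝ) (x' : ℝ × ℝ) : V3 :=
  (areaEl φ x')⁻¹ • ![-(pdR 0 φ x'), -(pdR 1 φ x'), 1]

/-- The point `(x₁, x₂, φ(x₁,x₂))` on the graph of `φ`. -/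
def graphPt (φ : ℝ × ℝ → ℝ) (x' : ℝ × ℝ) : V3 := ![x'.1, x'.2, φ x']

/-- The point `(x₁, x₂, h)`. -/
def pt3 (x' : ℝ × ℝ) (h : ℝ) : V3 := ![x'.1, x'.2, h]

/-- One period cell `(0,2π)²` of `ℝ²`. -/
def cellSq : Set (ℝ × ℝ) := Set.Ioo 0 (2 * π) ×ˢ Set.Ioo 0 (2 * π)

/-- The outgoing Rayleigh series with coefficients `En`. -/
def rayleighSeries (k₀ : ℝ) (α : ℝ × ℝ) (En : ℤ × ℤ → C3) : V3 → C3 := fun x =>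
  ∑' n : ℤ × ℤ,
    Complex.exp (Complex.I * ((rdot (alphaN α n) x : ℝ) + betaN k₀ α n * (x 2 : ℝ))) • En n

/-- The complex direction vector `d = α_m - β_m e₃` of the incident plane wave. -/
def dVec (k₀ : ℝ) (α : ℝ × ℝ) (m : ℤ × ℤ) : C3 :=
  toC3 (alphaN α m) - betaN k₀ α m • stdC 2

/-- `d · x` for `d ∈ ℂ³`, `x ∈ ℝ³`. -/
def cdotR (d : C3) (x : V3) : ℂ := d 0 * x 0 + d 1 * x 1 + d 2 * x 2

/-- `p_m = p - ((d·p)/k₀²) d`. -/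
def pmVec (k₀ : ℝ) (α : ℝ × ℝ) (m : ℤ × ℤ) (p : C3) : C3 :=
  p - (cdot (dVec k₀ α m) p / (k₀ ^ 2 : ℂ)) • dVec k₀ α m

/-- The incident wave `E^i(x) = (1/k₀²) curl curl [p e^{i d·x}]`. -/
def planeInc (k₀ : ℝ) (α : ℝ × ℝ) (m : ℤ × ℤ) (p : C3) : V3 → C3 := fun x =>
  ((k₀ ^ 2 : ℂ))⁻¹ •
    curl3 (curl3 fun y => Complex.exp (Complex.I * cdotR (dVec k₀ α m) y) • p) x

open Matrix

theorem cdot_eq_dotProduct (a b : C3) : cdot a b = a ⬝ᵥ b :=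
  (vec3_dotProduct a b).symm

theorem cross_eq_crossProduct (a b : C3) : cross a b = a ⨯₃ b :=
  (cross_apply a b).symm

theorem stdC_eq_single (j : Fin 3) : stdC j = Pi.single j 1 := by
  ext k
  simp [stdC, Pi.single_apply]

theorem cross_cross_sub_cross_neg_cross {R : Type*} [CommRing R] (E e d : Fin 3 → R) :
    E ⨯₃ e ⨯₃ d - e ⨯₃ (-d ⨯₃ E) = (-2 * (d ⬝ᵥ e)) • E + (d ⬝ᵥ E) • e + (e ⬝ᵥ E) • d := by
  rw [cross_cross_eq_smul_sub_smul, cross_cross_eq_smul_sub_smul', dotProduct_comm E d,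
    dotProduct_comm e d, neg_dotProduct]
  module

theorem dotProduct_sub_div_smul_self {m K : Type*} [Fintype m] [Field K] (d p : m → K) {c : K}
    (hdd : d ⬝ᵥ d = c) (hc : c ≠ 0) : d ⬝ᵥ (p - (d ⬝ᵥ p / c) • d) = 0 := by
  rw [dotProduct_sub, dotProduct_smul, hdd, smul_eq_mul, div_mul_cancel₀ _ hc, sub_self]

theorem toC3_sub_smul_stdC_two_dotProduct_self {a : V3} (ha : a 2 = 0) (β : ℂ) :
    (toC3 a - β • stdC 2) ⬝ᵥ (toC3 a - β • stdC 2) = ((rdot a a : ℝ) : ℂ) + β ^ 2 := by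
  simp only [vec3_dotProduct, rdot, toC3, stdC, ha, Pi.sub_apply, Pi.smul_apply, smul_eq_mul,
    Fin.reduceEq, if_true, if_false]
  push_cast
  ring

/-- the final vector-algebra identity in the proof of the mixed
reciprocity relation: if `a₃ = 0`, `a·a + β² = k₀²`, `d = a - β e₃` and `d·Ẽ = 0`, then
`((Ẽ × e₃) × d - e₃ × ((-d) × Ẽ)) · p_m = 2β (Ẽ·p)` where `p_m = p - ((d·p)/k₀²) d`. -/
theorem statement5 (k₀ : ℝ) (hk₀ : 0 < k₀) (a : V3) (ha : a 2 = 0) (β : ℂ)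
    (hdisp : ((rdot a a : ℝ) : ℂ) + β ^ 2 = (k₀ ^ 2 : ℂ))
    (p Et : C3) (d : C3) (hd : d = toC3 a - β • stdC 2)
    (hEt : cdot d Et = 0) :
    cdot (cross (cross Et (stdC 2)) d - cross (stdC 2) (cross (-d) Et))
        (p - (cdot d p / (k₀ ^ 2 : ℂ)) • d)
      = 2 * β * cdot Et p := by
  simp only [cdot_eq_dotProduct, cross_eq_crossProduct] at hEt ⊢
  have hde : d ⬝ᵥ stdC 2 = -β := by
    simp [hd, stdC_eq_single, toC3, ha]
  have hdd : d ⬝ᵥ d = (k₀ ^ 2 : ℂ) := by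
    rw [hd, toC3_sub_smul_stdC_two_dotProduct_self ha, hdisp]
  have hdp : d ⬝ᵥ (p - (d ⬝ᵥ p / (k₀ ^ 2 : ℂ)) • d) = 0 :=
    dotProduct_sub_div_smul_self d p hdd (by exact_mod_cast (pow_pos hk₀ 2).ne')
  have hEtp : Et ⬝ᵥ (p - (d ⬝ᵥ p / (k₀ ^ 2 : ℂ)) • d) = Et ⬝ᵥ p := by
    rw [dotProduct_sub, dotProduct_smul, dotProduct_comm Et d, hEt, smul_zero, sub_zero]
  rw [cross_cross_sub_cross_neg_cross, hde, hEt, add_dotProduct, add_dotProduct, smul_dotProduct,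
    smul_dotProduct, smul_dotProduct, hdp, hEtp]
  simp only [smul_eq_mul]
  ring
end
end

section
/- Let (E_n)_{n∈ℤ²}, (Ẽ_n)_{n∈ℤ²} ⊆ ℂ³ satisfy the divergence-free coefficient conditions α_n·E_n + β_n (E_n)₃ = 0 and α̃_n·Ẽ_n + β̃_n (Ẽ_n)₃ = 0 for all n, and suppose for some h₀ < h that Σ_n (1+|α_n|)|E_n| e^{−Im(β_n) h₀} < ∞ and Σ_n (1+|α̃_n|)|Ẽ_n| e^{−Im(β̃_n) h₀} < ∞. Define the outgoing Rayleigh series E^s(x) = Σ_n E_n e^{i(α_n·x + β_n x₃)} and W̃(x) = Σ_n Ẽ_n e^{i(α̃_n·x + β̃_n x₃)} for x₃ > h₀ (both series and their termwise first derivatives converge absolutely and locally uniformly, so curls are computed termwise). Then ∫_{(0,2π)²} [ (e₃ × curl E^s) · W̃ − (e₃ × curl W̃) · E^s ](x₁,x₂,h) dx₁ dx₂ = 0. -/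
noncomputable section

open MeasureTheory Real Set

/-!
Both fields are absolutely convergent superpositions of the modes `e^{i(α_n·x + β_n x₃)}`, and on
`x₃ > h₀` the weights `(1 + |α_n|) |E_n| e^{-Im(β_n) h₀}` also dominate the differentiated series,
so the curls may be taken termwise and the integrand at height `h` is a double series over
pairs `(n, m)` of a coefficient times the product of an `α`-mode and a `(-α)`-mode. That product
depends on `(x₁, x₂)` only through `e^{i((n₁+m₁)x₁ + (n₂+m₂)x₂)}`, whose integral over the period
cell vanishes unless `m = -n`. For `m = -n` the coefficient is `i((α_n·Ẽ)E₃ + (α_n·E)Ẽ₃)`, and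
since `α̃_{-n} = -α_n`, `β̃_{-n} = β_n` the divergence conditions read `α_n·E = -β_n E₃`,
`α_n·Ẽ = β_n Ẽ₃`, so it vanishes. The double series is integrated termwise because its terms
are bounded by products of the two summable weights.
-/

lemma hasSum_mul_of_summable_norm {ι κ R : Type*} [NormedRing R] [CompleteSpace R]
    {f : ι → R} {g : κ → R} {a b : R} (hf : HasSum f a) (hg : HasSum g b)
    (hf' : Summable (‖f ·‖)) (hg' : Summable (‖g ·‖)) :
    HasSum (fun p : ι × κ => f p.1 * g p.2) (a * b) :=
  hf.mul hg (summable_mul_of_summable_norm hf' hg')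

namespace Rayleigh

variable (k₀ : ℝ) (α : ℝ × ℝ)

def waveVec (n : ℤ × ℤ) : C3 := ![((α.1 + n.1 : ℝ) : ℂ), ((α.2 + n.2 : ℝ) : ℂ), betaN k₀ α n]

def mode (n : ℤ × ℤ) (x : V3) : ℂ :=
  Complex.exp (Complex.I * ((rdot (alphaN α n) x : ℝ) + betaN k₀ α n * (x 2 : ℝ)))

def pairing (d : C3) : V3 →L[ℝ] ℂ :=
  ∑ j, d j • (Complex.ofRealCLM ∘L ContinuousLinearMap.proj j)

lemma pairing_apply (d : C3) (v : V3) : pairing d v = ∑ j, d j * v j := by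
  simp [pairing]

lemma pairing_stdR (d : C3) (j : Fin 3) : pairing d (stdR j) = d j := by
  fin_cases j <;> simp [pairing_apply, stdR, Fin.sum_univ_three]

lemma norm_pairing_le {d : C3} {M : ℝ} (hd : ∀ j, ‖d j‖ ≤ M) : ‖pairing d‖ ≤ 3 * M := by
  have hM : 0 ≤ M := (norm_nonneg _).trans (hd 0)
  refine ContinuousLinearMap.opNorm_le_bound _ (by positivity) fun v => ?_
  rw [pairing_apply]
  calc ‖∑ j, d j * v j‖ ≤ ∑ j, ‖d j‖ * ‖v‖ := by
        refine (norm_sum_le _ _).trans (Finset.sum_le_sum fun j _ => ?_)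
        rw [norm_mul, Complex.norm_real]
        exact mul_le_mul_of_nonneg_left (norm_le_pi_norm v j) (norm_nonneg _)
    _ ≤ ∑ _j : Fin 3, M * ‖v‖ := by gcongr with j; exact hd j
    _ = 3 * M * ‖v‖ := by simp; ring

lemma mode_eq_exp_pairing (n : ℤ × ℤ) (x : V3) :
    mode k₀ α n x = Complex.exp (Complex.I * pairing (waveVec k₀ α n) x) := by
  simp [mode, pairing_apply, Fin.sum_univ_three, waveVec, rdot, alphaN]

lemma hasFDerivAt_mode (n : ℤ × ℤ) (x : V3) :
    HasFDerivAt (mode k₀ α n) ((Complex.I * mode k₀ α n x) • pairing (waveVec k₀ α n)) x := by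
  rw [funext (mode_eq_exp_pairing k₀ α n)]
  refine (((pairing _).hasFDerivAt).const_mul Complex.I).cexp.congr_fderiv ?_
  rw [smul_smul, mul_comm]

lemma continuous_mode (n : ℤ × ℤ) : Continuous (mode k₀ α n) :=
  continuous_iff_continuousAt.2 fun x => (hasFDerivAt_mode k₀ α n x).continuousAt

lemma betaN_im_nonneg (n : ℤ × ℤ) : 0 ≤ (betaN k₀ α n).im := by
  unfold betaN
  split_ifs <;> simp [Real.sqrt_nonneg]

lemma norm_mode (n : ℤ × ℤ) (x : V3) :
    ‖mode k₀ α n x‖ = Real.exp (-(betaN k₀ α n).im * x 2) := by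
  simp [mode, Complex.norm_exp, Complex.mul_re]

lemma enorm3_nonneg (v : V3) : 0 ≤ enorm3 v := Real.sqrt_nonneg _

lemma enorm3_alphaN (n : ℤ × ℤ) :
    enorm3 (alphaN α n) = Real.sqrt ((α.1 + n.1) ^ 2 + (α.2 + n.2) ^ 2) := by
  simp [enorm3, rdot, alphaN, sq]

lemma norm_betaN_le (n : ℤ × ℤ) : ‖betaN k₀ α n‖ ≤ |k₀| + enorm3 (alphaN α n) := by
  rw [enorm3_alphaN]
  set a := (α.1 + n.1) ^ 2 + (α.2 + n.2) ^ 2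
  have ha : 0 ≤ a := by positivity
  have hsa := Real.sqrt_nonneg a
  unfold betaN
  split_ifs
  · rw [Complex.norm_real, Real.norm_of_nonneg (Real.sqrt_nonneg _), ← Real.sqrt_sq_eq_abs]
    linarith [Real.sqrt_le_sqrt (show k₀ ^ 2 - a ≤ k₀ ^ 2 by linarith)]
  · rw [norm_mul, Complex.norm_I, one_mul, Complex.norm_real,
      Real.norm_of_nonneg (Real.sqrt_nonneg _)]
    linarith [abs_nonneg k₀, Real.sqrt_le_sqrt (show a - k₀ ^ 2 ≤ a by nlinarith)]

lemma norm_waveVec_le (n : ℤ × ℤ) (j : Fin 3) :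
    ‖waveVec k₀ α n j‖ ≤ |k₀| + enorm3 (alphaN α n) := by
  have hk := abs_nonneg k₀
  fin_cases j
  · show ‖((α.1 + n.1 : ℝ) : ℂ)‖ ≤ _
    rw [Complex.norm_real, Real.norm_eq_abs, enorm3_alphaN]
    exact le_add_of_nonneg_of_le hk (Real.abs_le_sqrt (le_add_of_nonneg_right (sq_nonneg _)))
  · show ‖((α.2 + n.2 : ℝ) : ℂ)‖ ≤ _
    rw [Complex.norm_real, Real.norm_eq_abs, enorm3_alphaN]
    exact le_add_of_nonneg_of_le hk (Real.abs_le_sqrt (le_add_of_nonneg_left (sq_nonneg _)))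
  · exact norm_betaN_le k₀ α n

lemma norm_cross_apply_le {d E : C3} {M : ℝ} (hd : ∀ j, ‖d j‖ ≤ M) (i : Fin 3) :
    ‖cross d E i‖ ≤ 2 * M * ‖E‖ := by
  have hE : ∀ j, ‖E j‖ ≤ ‖E‖ := norm_le_pi_norm E
  have hM : 0 ≤ M := (norm_nonneg _).trans (hd 0)
  have key : ∀ a b c e : Fin 3, ‖d a * E b - d c * E e‖ ≤ 2 * M * ‖E‖ := fun a b c e =>
    calc ‖d a * E b - d c * E e‖ ≤ ‖d a‖ * ‖E b‖ + ‖d c‖ * ‖E e‖ := by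
          rw [← norm_mul, ← norm_mul]; exact norm_sub_le _ _
      _ ≤ M * ‖E‖ + M * ‖E‖ := by gcongr <;> simp only [hd, hE]
      _ = 2 * M * ‖E‖ := by ring
  fin_cases i
  exacts [key 1 2 2 1, key 2 0 0 2, key 0 1 1 0]

def weight (En : ℤ × ℤ → C3) (h₀ : ℝ) (n : ℤ × ℤ) : ℝ :=
  (1 + enorm3 (alphaN α n)) * ‖En n‖ * Real.exp (-(betaN k₀ α n).im * h₀)

variable {k₀ α} {En Et : ℤ × ℤ → C3} {h₀ : ℝ} {x : V3}

lemma weight_nonneg (n : ℤ × ℤ) : 0 ≤ weight k₀ α En h₀ n := by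
  have := enorm3_nonneg (alphaN α n)
  unfold weight
  positivity

lemma norm_mode_mul_le (hx : h₀ ≤ x 2) (n : ℤ × ℤ) :
    ‖mode k₀ α n x‖ * (‖En n‖ * (1 + (|k₀| + enorm3 (alphaN α n)))) ≤
      (1 + |k₀|) * weight k₀ α En h₀ n := by
  have hmode : ‖mode k₀ α n x‖ ≤ Real.exp (-(betaN k₀ α n).im * h₀) := by
    rw [norm_mode]
    exact Real.exp_le_exp.2 (by nlinarith [betaN_im_nonneg k₀ α n])
  have ha := enorm3_nonneg (alphaN α n)
  have hk := abs_nonneg k₀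
  calc ‖mode k₀ α n x‖ * (‖En n‖ * (1 + (|k₀| + enorm3 (alphaN α n))))
      ≤ Real.exp (-(betaN k₀ α n).im * h₀) *
          (‖En n‖ * ((1 + |k₀|) * (1 + enorm3 (alphaN α n)))) := by
        gcongr; nlinarith
    _ = (1 + |k₀|) * weight k₀ α En h₀ n := by rw [weight]; ring

lemma norm_mode_mul_norm_le (hx : h₀ ≤ x 2) (n : ℤ × ℤ) :
    ‖mode k₀ α n x‖ * ‖En n‖ ≤ (1 + |k₀|) * weight k₀ α En h₀ n := by
  refine le_trans ?_ (norm_mode_mul_le hx n)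
  gcongr
  exact le_mul_of_one_le_right (norm_nonneg _)
    (by linarith [abs_nonneg k₀, enorm3_nonneg (alphaN α n)])

lemma norm_deriv_mode_mul_le (hx : h₀ ≤ x 2) (n : ℤ × ℤ) (i : Fin 3) :
    ‖(Complex.I * mode k₀ α n x * En n i) • pairing (waveVec k₀ α n)‖ ≤
      3 * ((1 + |k₀|) * weight k₀ α En h₀ n) := by
  rw [norm_smul]
  have hm := mul_nonneg (norm_nonneg (mode k₀ α n x)) (norm_nonneg (En n))
  calc ‖Complex.I * mode k₀ α n x * En n i‖ * ‖pairing (waveVec k₀ α n)‖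
      ≤ ‖mode k₀ α n x‖ * ‖En n‖ * (3 * (|k₀| + enorm3 (alphaN α n))) := by
        rw [mul_assoc, norm_mul, Complex.norm_I, one_mul, norm_mul]
        gcongr
        exacts [norm_le_pi_norm _ _, norm_pairing_le (norm_waveVec_le k₀ α n)]
    _ ≤ 3 * (‖mode k₀ α n x‖ * (‖En n‖ * (1 + (|k₀| + enorm3 (alphaN α n))))) := by nlinarith
    _ ≤ 3 * ((1 + |k₀|) * weight k₀ α En h₀ n) :=
        mul_le_mul_of_nonneg_left (norm_mode_mul_le hx n) (by norm_num)

lemma norm_curl_mode_le (hx : h₀ ≤ x 2) (n : ℤ × ℤ) (i : Fin 3) :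
    ‖Complex.I * cross (waveVec k₀ α n) (En n) i * mode k₀ α n x‖ ≤
      2 * ((1 + |k₀|) * weight k₀ α En h₀ n) := by
  rw [norm_mul, norm_mul, Complex.norm_I, one_mul]
  have hm := mul_nonneg (norm_nonneg (mode k₀ α n x)) (norm_nonneg (En n))
  calc ‖cross (waveVec k₀ α n) (En n) i‖ * ‖mode k₀ α n x‖
      ≤ 2 * (|k₀| + enorm3 (alphaN α n)) * ‖En n‖ * ‖mode k₀ α n x‖ := by
        gcongr; exact norm_cross_apply_le (norm_waveVec_le k₀ α n) i
    _ ≤ 2 * (‖mode k₀ α n x‖ * (‖En n‖ * (1 + (|k₀| + enorm3 (alphaN α n))))) := by nlinarith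
    _ ≤ 2 * ((1 + |k₀|) * weight k₀ α En h₀ n) :=
        mul_le_mul_of_nonneg_left (norm_mode_mul_le hx n) (by norm_num)

lemma hasSum_rayleighSeries (hsum : Summable (weight k₀ α En h₀)) (hx : h₀ ≤ x 2) (i : Fin 3) :
    HasSum (fun n => mode k₀ α n x * En n i) (rayleighSeries k₀ α En x i) := by
  have hs : Summable fun n => mode k₀ α n x • En n :=
    Summable.of_norm_bounded (hsum.mul_left (1 + |k₀|)) fun n =>
      by rw [norm_smul]; exact norm_mode_mul_norm_le hx n
  exact Pi.hasSum.1 hs.hasSum i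

def upperHalfSpace (h₀ : ℝ) : Set V3 := {y | h₀ < y 2}

lemma isOpen_upperHalfSpace : IsOpen (upperHalfSpace h₀) :=
  isOpen_lt continuous_const (continuous_apply 2)

lemma hasFDerivAt_tsum_mode_mul (hsum : Summable (weight k₀ α En h₀)) (hx : h₀ < x 2)
    (i : Fin 3) :
    HasFDerivAt (fun y => ∑' n, mode k₀ α n y * En n i)
      (∑' n, (Complex.I * mode k₀ α n x * En n i) • pairing (waveVec k₀ α n)) x := by
  have hconn : IsPreconnected (upperHalfSpace h₀) :=
    (convex_halfSpace_gt (f := fun y : V3 => y 2) ⟨fun _ _ => rfl, fun _ _ => rfl⟩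
      h₀).isPreconnected
  refine hasFDerivAt_tsum_of_isPreconnected ((hsum.mul_left (1 + |k₀|)).mul_left 3)
    isOpen_upperHalfSpace hconn (fun n y _ => ?_)
    (fun n y hy => norm_deriv_mode_mul_le (le_of_lt hy) n i) hx
    (hasSum_rayleighSeries hsum hx.le i).summable hx
  exact ((hasFDerivAt_mode k₀ α n y).mul_const (En n i)).congr_fderiv (by rw [smul_smul]; ring_nf)

lemma hasSum_pd_rayleighSeries (hsum : Summable (weight k₀ α En h₀)) (hx : h₀ < x 2)
    (j i : Fin 3) :
    HasSum (fun n => Complex.I * waveVec k₀ α n j * (mode k₀ α n x * En n i))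
      (pd j (fun y => rayleighSeries k₀ α En y i) x) := by
  have hsumL : Summable fun n => (Complex.I * mode k₀ α n x * En n i) • pairing (waveVec k₀ α n) :=
    Summable.of_norm_bounded ((hsum.mul_left _).mul_left 3) fun n =>
      norm_deriv_mode_mul_le hx.le n i
  have hloc : (fun y => rayleighSeries k₀ α En y i) =ᶠ[nhds x]
      fun y => ∑' n, mode k₀ α n y * En n i := by
    filter_upwards [isOpen_upperHalfSpace.mem_nhds hx] with y hy
    exact (hasSum_rayleighSeries hsum (le_of_lt hy) i).tsum_eq.symm
  rw [pd, hloc.fderiv_eq, (hasFDerivAt_tsum_mode_mul hsum hx i).fderiv]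
  refine ((ContinuousLinearMap.apply ℝ ℂ (stdR j)).hasSum hsumL.hasSum).congr_fun fun n => ?_
  simp only [ContinuousLinearMap.apply_apply, smul_apply, pairing_stdR, smul_eq_mul]
  ring

lemma hasSum_curl3_rayleighSeries (hsum : Summable (weight k₀ α En h₀)) (hx : h₀ < x 2)
    (i : Fin 3) :
    HasSum (fun n => Complex.I * cross (waveVec k₀ α n) (En n) i * mode k₀ α n x)
      (curl3 (rayleighSeries k₀ α En) x i) := by
  have hpd := hasSum_pd_rayleighSeries hsum hx
  fin_cases i
  · exact ((hpd 1 2).sub (hpd 2 1)).congr_fun fun n => by simp [cross]; ring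
  · exact ((hpd 2 0).sub (hpd 0 2)).congr_fun fun n => by simp [cross]; ring
  · exact ((hpd 0 1).sub (hpd 1 0)).congr_fun fun n => by simp [cross]; ring

lemma summable_norm_mode_mul (hsum : Summable (weight k₀ α En h₀)) (hx : h₀ ≤ x 2) (i : Fin 3) :
    Summable fun n => ‖mode k₀ α n x * En n i‖ :=
  Summable.of_nonneg_of_le (fun _ => norm_nonneg _)
    (fun n => by
      rw [norm_mul]
      exact le_trans (by gcongr; exact norm_le_pi_norm _ _) (norm_mode_mul_norm_le hx n))
    (hsum.mul_left (1 + |k₀|))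

lemma summable_norm_curl_mode (hsum : Summable (weight k₀ α En h₀)) (hx : h₀ ≤ x 2)
    (i : Fin 3) :
    Summable fun n => ‖Complex.I * cross (waveVec k₀ α n) (En n) i * mode k₀ α n x‖ :=
  Summable.of_nonneg_of_le (fun _ => norm_nonneg _) (fun n => norm_curl_mode_le hx n i)
    ((hsum.mul_left (1 + |k₀|)).mul_left 2)

lemma cdot_cross_stdC_two (v w : C3) : cdot (cross (stdC 2) v) w = v 0 * w 1 - v 1 * w 0 := by
  simp [cdot, cross, stdC]
  ring

variable (k₀ α En Et) in
def greenCoeff (n m : ℤ × ℤ) : ℂ :=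
  Complex.I * (cross (waveVec k₀ α n) (En n) 0 * Et m 1 - cross (waveVec k₀ α n) (En n) 1 * Et m 0
    - (cross (waveVec k₀ (-α) m) (Et m) 0 * En n 1 - cross (waveVec k₀ (-α) m) (Et m) 1 * En n 0))

variable (k₀ α En Et) in
def greenTerm (h : ℝ) (p : (ℤ × ℤ) × (ℤ × ℤ)) (x' : ℝ × ℝ) : ℂ :=
  greenCoeff k₀ α En Et p.1 p.2 * (mode k₀ α p.1 (pt3 x' h) * mode k₀ (-α) p.2 (pt3 x' h))

lemma hasSum_greenTerm (hE : Summable (weight k₀ α En h₀)) (hT : Summable (weight k₀ (-α) Et h₀))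
    {h : ℝ} (hh : h₀ < h) (x' : ℝ × ℝ) :
    HasSum (fun p => greenTerm k₀ α En Et h p x')
      (cdot (cross (stdC 2) (curl3 (rayleighSeries k₀ α En) (pt3 x' h)))
          (rayleighSeries k₀ (-α) Et (pt3 x' h)) -
        cdot (cross (stdC 2) (curl3 (rayleighSeries k₀ (-α) Et) (pt3 x' h)))
          (rayleighSeries k₀ α En (pt3 x' h))) := by
  have hx : h₀ < pt3 x' h 2 := hh
  have curlE_valT (i j : Fin 3) := hasSum_mul_of_summable_norm (hasSum_curl3_rayleighSeries hE hx i)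
    (hasSum_rayleighSeries hT hx.le j) (summable_norm_curl_mode hE hx.le i)
    (summable_norm_mode_mul hT hx.le j)
  have valE_curlT (i j : Fin 3) := hasSum_mul_of_summable_norm (hasSum_rayleighSeries hE hx.le i)
    (hasSum_curl3_rayleighSeries hT hx j) (summable_norm_mode_mul hE hx.le i)
    (summable_norm_curl_mode hT hx.le j)
  rw [cdot_cross_stdC_two, cdot_cross_stdC_two, mul_comm (curl3 (rayleighSeries k₀ (-α) Et) _ 0),
    mul_comm (curl3 (rayleighSeries k₀ (-α) Et) _ 1)]
  exact (((curlE_valT 0 1).sub (curlE_valT 1 0)).sub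
    ((valE_curlT 1 0).sub (valE_curlT 0 1))).congr_fun fun p => by
      simp only [greenTerm, greenCoeff]
      ring

lemma mode_mul_mode_neg (n m : ℤ × ℤ) (x' : ℝ × ℝ) (h : ℝ) :
    mode k₀ α n (pt3 x' h) * mode k₀ (-α) m (pt3 x' h) =
      Complex.exp (Complex.I * (betaN k₀ α n + betaN k₀ (-α) m) * h) *
        (Complex.exp (Complex.I * ((n.1 + m.1 : ℤ) : ℂ) * x'.1) *
          Complex.exp (Complex.I * ((n.2 + m.2 : ℤ) : ℂ) * x'.2)) := by
  simp only [mode, ← Complex.exp_add]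
  congr 1
  simp [rdot, alphaN, pt3]
  ring

lemma integral_exp_int_mul_Ioo (k : ℤ) :
    ∫ x in Ioo 0 (2 * π), Complex.exp (Complex.I * k * x) =
      if k = 0 then ((2 * π : ℝ) : ℂ) else 0 := by
  split_ifs with hk
  · simp [hk, measureReal_def, Real.volume_Ioo, Real.pi_pos.le]
  · have hc : Complex.I * k ≠ 0 := mul_ne_zero Complex.I_ne_zero (Int.cast_ne_zero.2 hk)
    rw [← integral_Ioc_eq_integral_Ioo, ← intervalIntegral.integral_of_le (by positivity),
      integral_exp_mul_complex hc]
    rw [show Complex.I * k * ((2 * π : ℝ) : ℂ) = k * (2 * π * Complex.I) by push_cast; ring,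
      Complex.exp_int_mul_two_pi_mul_I]
    simp

lemma betaN_neg_neg (n : ℤ × ℤ) : betaN k₀ (-α) (-n) = betaN k₀ α n := by
  simp only [betaN, Prod.fst_neg, Prod.snd_neg, Int.cast_neg, ← neg_add, neg_sq]

lemma greenCoeff_neg_eq_zero {n : ℤ × ℤ}
    (hE : cdot (toC3 (alphaN α n)) (En n) + betaN k₀ α n * En n 2 = 0)
    (hT : cdot (toC3 (alphaN (-α) (-n))) (Et (-n)) + betaN k₀ (-α) (-n) * Et (-n) 2 = 0) :
    greenCoeff k₀ α En Et n (-n) = 0 := by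
  rw [betaN_neg_neg] at hT
  simp only [cdot, toC3, alphaN, Prod.fst_neg, Prod.snd_neg, Int.cast_neg] at hE hT
  simp only [greenCoeff, cross, waveVec, betaN_neg_neg, Prod.fst_neg, Prod.snd_neg, Int.cast_neg,
    Matrix.cons_val_zero, Matrix.cons_val_one, Matrix.cons_val_two, Matrix.head_cons,
    Matrix.tail_cons]
  push_cast at hE hT ⊢
  linear_combination (Complex.I * Et (-n) 2) * hE - (Complex.I * En n 2) * hT

lemma integral_greenTerm_eq_zero
    (hE : ∀ n, cdot (toC3 (alphaN α n)) (En n) + betaN k₀ α n * En n 2 = 0)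
    (hT : ∀ n, cdot (toC3 (alphaN (-α) n)) (Et n) + betaN k₀ (-α) n * Et n 2 = 0)
    (h : ℝ) (p : (ℤ × ℤ) × (ℤ × ℤ)) :
    ∫ x' in cellSq, greenTerm k₀ α En Et h p x' = 0 := by
  obtain ⟨n, m⟩ := p
  simp only [greenTerm, mode_mul_mode_neg, ← mul_assoc (greenCoeff k₀ α En Et n m)]
  rw [integral_const_mul, cellSq, Measure.volume_eq_prod,
    setIntegral_prod_mul (fun t : ℝ => Complex.exp (Complex.I * ((n.1 + m.1 : ℤ) : ℂ) * t))
      (fun t : ℝ => Complex.exp (Complex.I * ((n.2 + m.2 : ℤ) : ℂ) * t)),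
    integral_exp_int_mul_Ioo, integral_exp_int_mul_Ioo]
  by_cases hm : m = -n
  · subst hm
    simp [greenCoeff_neg_eq_zero (hE n) (hT (-n))]
  · have : n.1 + m.1 ≠ 0 ∨ n.2 + m.2 ≠ 0 := by
      contrapose! hm
      ext <;> simp <;> omega
    rcases this with h1 | h2 <;> simp [*]

lemma norm_greenCoeff_le (n m : ℤ × ℤ) :
    ‖greenCoeff k₀ α En Et n m‖ ≤
      4 * ((‖En n‖ * (1 + (|k₀| + enorm3 (alphaN α n)))) *
        (‖Et m‖ * (1 + (|k₀| + enorm3 (alphaN (-α) m))))) := by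
  set ρ := |k₀| + enorm3 (alphaN α n)
  set σ := |k₀| + enorm3 (alphaN (-α) m)
  have hρ : 0 ≤ ρ := add_nonneg (abs_nonneg _) (enorm3_nonneg _)
  have hσ : 0 ≤ σ := add_nonneg (abs_nonneg _) (enorm3_nonneg _)
  have hAB := mul_nonneg (norm_nonneg (En n)) (norm_nonneg (Et m))
  have hE (i j : Fin 3) : ‖cross (waveVec k₀ α n) (En n) i * Et m j‖ ≤ 2 * ρ * ‖En n‖ * ‖Et m‖ := by
    rw [norm_mul]
    exact mul_le_mul (norm_cross_apply_le (norm_waveVec_le k₀ α n) i) (norm_le_pi_norm _ _)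
      (norm_nonneg _) (by positivity)
  have hT (i j : Fin 3) :
      ‖cross (waveVec k₀ (-α) m) (Et m) i * En n j‖ ≤ 2 * σ * ‖Et m‖ * ‖En n‖ := by
    rw [norm_mul]
    exact mul_le_mul (norm_cross_apply_le (norm_waveVec_le k₀ (-α) m) i) (norm_le_pi_norm _ _)
      (norm_nonneg _) (by positivity)
  rw [greenCoeff, norm_mul, Complex.norm_I, one_mul]
  refine (norm_sub_le _ _).trans ((add_le_add (norm_sub_le _ _) (norm_sub_le _ _)).trans ?_)
  nlinarith [hE 0 1, hE 1 0, hT 0 1, hT 1 0, mul_nonneg hρ hσ, mul_nonneg (mul_nonneg hρ hσ) hAB]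

lemma norm_greenTerm_le {h : ℝ} (hh : h₀ ≤ h) (p : (ℤ × ℤ) × (ℤ × ℤ)) (x' : ℝ × ℝ) :
    ‖greenTerm k₀ α En Et h p x'‖ ≤
      4 * ((1 + |k₀|) * weight k₀ α En h₀ p.1 * ((1 + |k₀|) * weight k₀ (-α) Et h₀ p.2)) := by
  have hx : h₀ ≤ pt3 x' h 2 := hh
  rw [greenTerm, norm_mul, norm_mul]
  calc ‖greenCoeff k₀ α En Et p.1 p.2‖ *
        (‖mode k₀ α p.1 (pt3 x' h)‖ * ‖mode k₀ (-α) p.2 (pt3 x' h)‖)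
      ≤ 4 * ((‖En p.1‖ * (1 + (|k₀| + enorm3 (alphaN α p.1)))) *
          (‖Et p.2‖ * (1 + (|k₀| + enorm3 (alphaN (-α) p.2))))) *
          (‖mode k₀ α p.1 (pt3 x' h)‖ * ‖mode k₀ (-α) p.2 (pt3 x' h)‖) := by
        gcongr; exact norm_greenCoeff_le p.1 p.2
    _ = 4 * ((‖mode k₀ α p.1 (pt3 x' h)‖ * (‖En p.1‖ * (1 + (|k₀| + enorm3 (alphaN α p.1))))) *
          (‖mode k₀ (-α) p.2 (pt3 x' h)‖ *
            (‖Et p.2‖ * (1 + (|k₀| + enorm3 (alphaN (-α) p.2)))))) := by ring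
    _ ≤ _ := by
        have := enorm3_nonneg (alphaN (-α) p.2)
        refine mul_le_mul_of_nonneg_left (mul_le_mul (norm_mode_mul_le hx p.1)
          (norm_mode_mul_le hx p.2) (by positivity) ?_) (by norm_num)
        exact mul_nonneg (by positivity) (weight_nonneg p.1)

lemma integrable_greenTerm (h : ℝ) (p : (ℤ × ℤ) × (ℤ × ℤ)) :
    Integrable (greenTerm k₀ α En Et h p) (volume.restrict cellSq) := by
  have hpt : Continuous fun x' : ℝ × ℝ => pt3 x' h := by unfold pt3; fun_prop
  have hcont : Continuous (greenTerm k₀ α En Et h p) := continuous_const.mul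
    (((continuous_mode k₀ α _).comp hpt).mul ((continuous_mode k₀ (-α) _).comp hpt))
  exact (hcont.continuousOn.integrableOn_compact (isCompact_Icc.prod isCompact_Icc)).mono_set
    (prod_mono Ioo_subset_Icc_self Ioo_subset_Icc_self)

lemma summable_integral_norm_greenTerm (hE : Summable (weight k₀ α En h₀))
    (hT : Summable (weight k₀ (-α) Et h₀)) {h : ℝ} (hh : h₀ ≤ h) :
    Summable fun p => ∫ x' in cellSq, ‖greenTerm k₀ α En Et h p x'‖ := by
  have hvol : volume cellSq < ⊤ :=
    ((Metric.isBounded_Ioo _ _).prod (Metric.isBounded_Ioo _ _)).measure_lt_top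
  have hw {β : ℝ × ℝ} {F : ℤ × ℤ → C3} : 0 ≤ fun n => (1 + |k₀|) * weight k₀ β F h₀ n :=
    fun n => mul_nonneg (by positivity) (weight_nonneg n)
  refine Summable.of_nonneg_of_le (fun p => integral_nonneg fun _ => norm_nonneg _) (fun p => ?_)
    ((((hE.mul_left _).mul_of_nonneg (hT.mul_left _) hw hw).mul_left 4).mul_right
      (volume.real cellSq))
  exact (Real.le_norm_self _).trans (norm_setIntegral_le_of_norm_le_const hvol fun x' _ => by
    rw [norm_norm]; exact norm_greenTerm_le hh p x')

end Rayleigh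

theorem statement7_general (k₀ : ℝ) (α : ℝ × ℝ) (h : ℝ)
    (En Et : ℤ × ℤ → C3)
    (hEdivfree : ∀ n : ℤ × ℤ,
      cdot (toC3 (alphaN α n)) (En n) + betaN k₀ α n * En n 2 = 0)
    (hTdivfree : ∀ n : ℤ × ℤ,
      cdot (toC3 (alphaN (-α) n)) (Et n) + betaN k₀ (-α) n * Et n 2 = 0)
    (h₀ : ℝ) (hh₀ : h₀ < h)
    (hEsum : Summable fun n : ℤ × ℤ =>
      (1 + enorm3 (alphaN α n)) * ‖En n‖ * Real.exp (-(betaN k₀ α n).im * h₀))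
    (hTsum : Summable fun n : ℤ × ℤ =>
      (1 + enorm3 (alphaN (-α) n)) * ‖Et n‖ * Real.exp (-(betaN k₀ (-α) n).im * h₀)) :
    (∫ x' in cellSq,
        (cdot (cross (stdC 2) (curl3 (rayleighSeries k₀ α En) (pt3 x' h)))
          (rayleighSeries k₀ (-α) Et (pt3 x' h)) -
        cdot (cross (stdC 2) (curl3 (rayleighSeries k₀ (-α) Et) (pt3 x' h)))
          (rayleighSeries k₀ α En (pt3 x' h))))
      = 0 := by
  calc _ = ∫ x' in cellSq, ∑' p, Rayleigh.greenTerm k₀ α En Et h p x' :=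
        integral_congr_ae (ae_of_all _ fun x' =>
          (Rayleigh.hasSum_greenTerm hEsum hTsum hh₀ x').tsum_eq.symm)
    _ = ∑' p, ∫ x' in cellSq, Rayleigh.greenTerm k₀ α En Et h p x' :=
        (integral_tsum_of_summable_integral_norm (Rayleigh.integrable_greenTerm h)
          (Rayleigh.summable_integral_norm_greenTerm hEsum hTsum hh₀.le)).symm
    _ = 0 := by simp [Rayleigh.integral_greenTerm_eq_zero hEdivfree hTdivfree]

/-- for two outgoing Rayleigh series `E^s` (α-quasi-periodic) and `W̃`
((-α)-quasi-periodic) with divergence-free coefficients, the Green integrand over the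
period cell at height `h` integrates to zero. -/
theorem statement7 (k₀ : ℝ) (hk₀ : 0 < k₀) (α : ℝ × ℝ) (h : ℝ)
    (En Et : ℤ × ℤ → C3)
    (hEdivfree : ∀ n : ℤ × ℤ,
      cdot (toC3 (alphaN α n)) (En n) + betaN k₀ α n * En n 2 = 0)
    (hTdivfree : ∀ n : ℤ × ℤ,
      cdot (toC3 (alphaN (-α) n)) (Et n) + betaN k₀ (-α) n * Et n 2 = 0)
    (h₀ : ℝ) (hh₀ : h₀ < h)
    (hEsum : Summable fun n : ℤ × ℤ =>
      (1 + enorm3 (alphaN α n)) * ‖En n‖ * Real.exp (-(betaN k₀ α n).im * h₀))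
    (hTsum : Summable fun n : ℤ × ℤ =>
      (1 + enorm3 (alphaN (-α) n)) * ‖Et n‖ * Real.exp (-(betaN k₀ (-α) n).im * h₀)) :
    (∫ x' in cellSq,
        (cdot (cross (stdC 2) (curl3 (rayleighSeries k₀ α En) (pt3 x' h)))
          (rayleighSeries k₀ (-α) Et (pt3 x' h)) -
        cdot (cross (stdC 2) (curl3 (rayleighSeries k₀ (-α) Et) (pt3 x' h)))
          (rayleighSeries k₀ α En (pt3 x' h))))
      = 0 :=
  statement7_general k₀ α h En Et hEdivfree hTdivfree h₀ hh₀ hEsum hTsum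
end
end

section
/- Assume β_n ≠ 0 for all n ∈ ℤ². Then for all x, y ∈ ℝ³ with x₃ ≠ y₃, the family n ↦ (1/(iβ_n)) exp( i α_n·(x−y) + i β_n |x₃ − y₃| ) is absolutely summable over ℤ² (so the free-space quasi-periodic Green's function G₀(x,y) = (1/8π²) Σ_{n∈ℤ²} (1/(iβ_n)) e^{i α_n·(x−y) + i β_n |x₃−y₃|} is well defined for x₃ ≠ y₃). -/
noncomputable section

open MeasureTheory Real Set

/-!
Outside a finite set of indices, `|α_n|² > k₀² + 1`, so `β_n = i s_n` with `s_n = √(|α_n|² - k₀²) ≥ 1`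
and the `n`-th term has modulus `s_n⁻¹ e^{-s_n d}`, `d = |x₃ - y₃| > 0`. Since
`s_n + |k₀| ≥ |α_n| ≥ (|α₁+n₁| + |α₂+n₂|) / 2`, these terms are dominated by
`e^{d|k₀|} e^{-d|α₁+n₁|/2} e^{-d|α₂+n₂|/2}`, a product of two summable families over `ℤ`.
-/

open Filter Complex

lemma summable_exp_neg_mul_abs_intCast {c : ℝ} (hc : 0 < c) :
    Summable fun n : ℤ => Real.exp (-(c * |(n : ℝ)|)) := by
  have hnat : Summable fun n : ℕ => Real.exp (-(c * n)) := by
    simpa only [← Real.exp_nat_mul, mul_neg, mul_comm] using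
      summable_geometric_of_lt_one (Real.exp_nonneg (-c)) (Real.exp_lt_one_iff.mpr (by linarith))
  apply Summable.of_nat_of_neg <;> simpa using hnat

lemma summable_exp_neg_mul_abs_add_intCast {c : ℝ} (hc : 0 < c) (t : ℝ) :
    Summable fun n : ℤ => Real.exp (-(c * |t + n|)) := by
  refine ((summable_exp_neg_mul_abs_intCast hc).mul_left (Real.exp (c * |t|))).of_nonneg_of_le
    (fun _ => Real.exp_nonneg _) fun n => ?_
  rw [← Real.exp_add, Real.exp_le_exp]
  have := abs_sub_abs_le_abs_sub (n : ℝ) (-t)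
  rw [abs_neg, sub_neg_eq_add, add_comm] at this
  nlinarith

lemma tendsto_abs_add_intCast_cofinite (t : ℝ) :
    Tendsto (fun m : ℤ => |t + m|) cofinite atTop := by
  have h := tendsto_norm_cocompact_atTop.comp Int.tendsto_coe_cofinite
  refine tendsto_atTop_mono (fun m => ?_) (tendsto_atTop_add_const_left _ (-|t|) h)
  have := abs_sub_abs_le_abs_sub (m : ℝ) (-t)
  rw [abs_neg, sub_neg_eq_add, add_comm] at this
  simp only [Function.comp_apply, Real.norm_eq_abs]
  linarith

lemma eventually_cofinite_lt_sq_add_sq (α : ℝ × ℝ) (R : ℝ) :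
    ∀ᶠ n : ℤ × ℤ in cofinite, R < (α.1 + n.1) ^ 2 + (α.2 + n.2) ^ 2 := by
  have hfin (t : ℝ) : {m : ℤ | ¬ R < (t + m) ^ 2}.Finite := by
    have := ((tendsto_pow_atTop two_ne_zero).comp
      (tendsto_abs_add_intCast_cofinite t)).eventually_gt_atTop R
    exact eventually_cofinite.mp (by simpa only [Function.comp_apply, sq_abs] using this)
  refine eventually_cofinite.mpr (((hfin α.1).prod (hfin α.2)).subset fun n hn => ?_)
  simp only [Set.mem_ofPred_eq, not_lt, Set.mem_prod] at hn ⊢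
  constructor <;> nlinarith [sq_nonneg (α.1 + n.1), sq_nonneg (α.2 + n.2)]

lemma betaN_of_lt {k₀ : ℝ} {α : ℝ × ℝ} {n : ℤ × ℤ}
    (h : k₀ ^ 2 < (α.1 + n.1) ^ 2 + (α.2 + n.2) ^ 2) :
    betaN k₀ α n = I * (Real.sqrt ((α.1 + n.1) ^ 2 + (α.2 + n.2) ^ 2 - k₀ ^ 2) : ℂ) :=
  if_neg h.not_ge

lemma norm_one_div_I_mul_mul_exp_of_imaginary (r s d : ℝ) :
    ‖1 / (I * (I * s)) * exp (I * r + I * (I * s) * d)‖ = |s|⁻¹ * Real.exp (-(s * d)) := by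
  have hI : I * (I * s) = -(s : ℂ) := by rw [← mul_assoc, I_mul_I, neg_one_mul]
  rw [norm_mul, norm_exp, hI]
  simp [mul_comm]

lemma half_abs_add_abs_le_sqrt_sub_add_abs (a b k : ℝ) :
    (|a| + |b|) / 2 ≤ Real.sqrt (a ^ 2 + b ^ 2 - k ^ 2) + |k| := by
  have hs : a ^ 2 + b ^ 2 - k ^ 2 ≤ Real.sqrt (a ^ 2 + b ^ 2 - k ^ 2) ^ 2 :=
    Real.sq_sqrt' ▸ le_max_left _ _
  refine (pow_le_pow_iff_left₀ (by positivity) (by positivity) two_ne_zero).mp ?_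
  nlinarith [sq_abs a, sq_abs b, sq_abs k, sq_nonneg (|a| - |b|),
    mul_nonneg (Real.sqrt_nonneg (a ^ 2 + b ^ 2 - k ^ 2)) (abs_nonneg k)]

lemma norm_mode_le_of_lt {k₀ d : ℝ} {α : ℝ × ℝ} {n : ℤ × ℤ} (hd : 0 ≤ d) (r : ℝ)
    (hn : k₀ ^ 2 + 1 < (α.1 + n.1) ^ 2 + (α.2 + n.2) ^ 2) :
    ‖1 / (I * betaN k₀ α n) * exp (I * r + I * betaN k₀ α n * d)‖ ≤
      Real.exp (d * |k₀|) *
        (Real.exp (-(d / 2 * |α.1 + n.1|)) * Real.exp (-(d / 2 * |α.2 + n.2|))) := by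
  rw [betaN_of_lt (by linarith), norm_one_div_I_mul_mul_exp_of_imaginary,
    abs_of_nonneg (Real.sqrt_nonneg _)]
  set s := Real.sqrt ((α.1 + n.1) ^ 2 + (α.2 + n.2) ^ 2 - k₀ ^ 2)
  have hs : 1 ≤ s := Real.le_sqrt_of_sq_le (by linarith)
  have hsk := half_abs_add_abs_le_sqrt_sub_add_abs (α.1 + n.1) (α.2 + n.2) k₀
  calc s⁻¹ * Real.exp (-(s * d)) ≤ Real.exp (-(s * d)) :=
        mul_le_of_le_one_left (Real.exp_nonneg _) (inv_le_one_of_one_le₀ hs)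
    _ ≤ _ := by
        rw [← Real.exp_add, ← Real.exp_add, Real.exp_le_exp]
        nlinarith

theorem statement9_general (k₀ : ℝ) (α : ℝ × ℝ) (x y : V3) (hxy : x 2 ≠ y 2) :
    Summable fun n : ℤ × ℤ =>
      ‖(1 / (Complex.I * betaN k₀ α n)) *
        Complex.exp (Complex.I * ((rdot (alphaN α n) (x - y) : ℝ) : ℂ) +
          Complex.I * betaN k₀ α n * ((|x 2 - y 2| : ℝ) : ℂ))‖ := by
  have hd : 0 < |x 2 - y 2| := abs_pos.mpr (sub_ne_zero.mpr hxy)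
  have hdecay := (summable_exp_neg_mul_abs_add_intCast (half_pos hd) α.1).mul_of_nonneg
    (summable_exp_neg_mul_abs_add_intCast (half_pos hd) α.2)
    (fun _ => Real.exp_nonneg _) (fun _ => Real.exp_nonneg _)
  refine (hdecay.mul_left (Real.exp (|x 2 - y 2| * |k₀|))).of_norm_bounded_eventually ?_
  filter_upwards [eventually_cofinite_lt_sq_add_sq α (k₀ ^ 2 + 1)] with n hn
  rw [norm_norm]
  exact norm_mode_le_of_lt hd.le _ hn

/-- absolute summability of the mode series of the free-space
quasi-periodic Green's function for `x₃ ≠ y₃`. -/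
theorem statement9 (k₀ : ℝ) (hk₀ : 0 < k₀) (α : ℝ × ℝ)
    (hβ : ∀ n : ℤ × ℤ, betaN k₀ α n ≠ 0) (x y : V3) (hxy : x 2 ≠ y 2) :
    Summable fun n : ℤ × ℤ =>
      ‖(1 / (Complex.I * betaN k₀ α n)) *
        Complex.exp (Complex.I * ((rdot (alphaN α n) (x - y) : ℝ) : ℂ) +
          Complex.I * betaN k₀ α n * ((|x 2 - y 2| : ℝ) : ℂ))‖ :=
  statement9_general k₀ α x y hxy
end
end

section
/- Let b > c, Q = (0,2π)² × (c,b), and let q : {c ≤ x₃ ≤ b} → ℂ and F : {c ≤ x₃ ≤ b} → ℂ³ be continuous. Suppose E and E₂ are C² vector fields with values in ℂ³ on the closed slab {c ≤ x₃ ≤ b}, both α-quasi-periodic, such that curl curl E − k₀² q E = F and curl curl E₂ − k₀² q̄ E₂ = 0 on the open slab (q̄ the complex conjugate of q), and such that on the top face {x₃ = b}: e₃ × E = 0 and e₃ × curl E = 0, while on the bottom face {x₃ = c}: e₃ × E = 0 and e₃ × E₂ = 0. Then ∫_Q F(x) · conj(E₂(x)) dx = 0, where conj denotes componentwise complex conjugation.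 (This is the orthogonality relation derived by Green's vector formula in the proof of the uniqueness theorem for the refractive index.) -/
noncomputable section

open MeasureTheory Real Set

/-- The closed slab `{c ≤ x₃ ≤ b}`. -/
def slab (c b : ℝ) : Set V3 := {x : V3 | c ≤ x 2 ∧ x 2 ≤ b}

/-- One period cell `Q = (0,2π)² × (c,b)` of the slab. -/
def slabCell (c b : ℝ) : Set V3 :=
  {x : V3 | x 0 ∈ Set.Ioo 0 (2 * π) ∧ x 1 ∈ Set.Ioo 0 (2 * π) ∧ x 2 ∈ Set.Ioo c b}

/-!
With `G = conj E₂`, Green's second vector formula says that `W = E × curl G − G × curl E` has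
divergence `G · curl curl E − E · curl curl G`. Conjugating the equation for `E₂` gives
`curl curl G = k₀² q G`, so `div W = F · G` in the open slab and `∫_Q F · G` is the flux of
`W` through `∂Q`. The phases of `E` and `G` are conjugate, so `W` is `2π`-periodic and the
fluxes through opposite lateral faces cancel; on the top and bottom `e₃ · W` involves only
tangential components, which the boundary conditions kill.
-/

open Filter Topology

lemma ContDiffOn.differentiableAt_of_isOpen {E F : Type*} [NormedAddCommGroup E]
    [NormedSpace ℝ E] [NormedAddCommGroup F] [NormedSpace ℝ F] {f : E → F} {U : Set E} {x : E}
    {n : WithTop ℕ∞} (hf : ContDiffOn ℝ n f U) (hn : n ≠ 0) (hU : IsOpen U) (hx : x ∈ U) :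
    DifferentiableAt ℝ f x :=
  (hf.differentiableOn hn).differentiableAt (hU.mem_nhds hx)

lemma stdR_eq_single (j : Fin 3) : stdR j = Pi.single j 1 := by
  ext k; simp [stdR, Pi.single_apply]

section PartialDerivative

variable {f g : V3 → ℂ} {x : V3} (j : Fin 3)

lemma pd_sub (hf : DifferentiableAt ℝ f x) (hg : DifferentiableAt ℝ g x) :
    pd j (fun y => f y - g y) x = pd j f x - pd j g x := by
  simp [pd, fderiv_fun_sub hf hg]

lemma pd_mul (hf : DifferentiableAt ℝ f x) (hg : DifferentiableAt ℝ g x) :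
    pd j (fun y => f y * g y) x = pd j f x * g x + f x * pd j g x := by
  simp [pd, fderiv_fun_mul hf hg]
  ring

lemma pd_const_mul (a : ℂ) (hf : DifferentiableAt ℝ f x) :
    pd j (fun y => a * f y) x = a * pd j f x := by
  simp [pd, fderiv_const_mul hf]

lemma pd_congr (h : f =ᶠ[𝓝 x] g) : pd j f x = pd j g x := by
  simp [pd, h.fderiv_eq]

lemma pd_comp_add_right (v : V3) : pd j (fun y => f (y + v)) x = pd j f (x + v) := by
  simp [pd, fderiv_comp_add_right]

lemma pd_conj : pd j (fun y => starRingEnd ℂ (f y)) x = starRingEnd ℂ (pd j f x) := by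
  simp only [pd, ← Complex.star_def]
  rw [fderiv_star]
  rfl

lemma contDiffOn_pd {U : Set V3} (hU : IsOpen U) (hf : ContDiffOn ℝ 2 f U) :
    ContDiffOn ℝ 1 (pd j f) U :=
  (hf.fderiv_of_isOpen hU (by norm_num)).clm_apply contDiffOn_const

end PartialDerivative

section Curl

variable {u w : V3 → C3} {x : V3}

lemma curl3_congr (h : u =ᶠ[𝓝 x] w) : curl3 u x = curl3 w x := by
  have hc : ∀ k, (fun y => u y k) =ᶠ[𝓝 x] fun y => w y k :=
    fun k => h.mono fun y hy => congrFun hy k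
  simp only [curl3, pd_congr _ (hc _)]

lemma curl3_comp_add_right (v : V3) : curl3 (fun y => u (y + v)) x = curl3 u (x + v) := by
  have h (k j : Fin 3) : pd j (fun y => u (y + v) k) x = pd j (fun y => u y k) (x + v) :=
    pd_comp_add_right (f := fun y => u y k) j v
  simp only [curl3, h]

lemma curl3_const_smul (a : ℂ) (hu : DifferentiableAt ℝ u x) :
    curl3 (fun y => a • u y) x = a • curl3 u x := by
  have hc := differentiableAt_pi.1 hu
  ext i; fin_cases i <;> simp [curl3, pd_const_mul _ a (hc _)] <;> ring

lemma curl3_star : curl3 (fun y => star (u y)) = fun y => star (curl3 u y) := by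
  have h (y : V3) (k j : Fin 3) :
      pd j (fun y => starRingEnd ℂ (u y k)) y = starRingEnd ℂ (pd j (fun y => u y k) y) :=
    pd_conj (f := fun y => u y k) j
  ext y i; fin_cases i <;> simp [curl3, h]

lemma contDiffOn_curl3 {U : Set V3} (hU : IsOpen U) (hu : ContDiffOn ℝ 2 u U) :
    ContDiffOn ℝ 1 (curl3 u) U := by
  have hc (k j : Fin 3) := contDiffOn_pd j hU (contDiffOn_pi.1 hu k)
  refine contDiffOn_pi.2 fun i => ?_
  fin_cases i
  · exact (hc 2 1).sub (hc 1 2)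
  · exact (hc 0 2).sub (hc 2 0)
  · exact (hc 1 0).sub (hc 0 1)

lemma ContDiffOn.differentiableAt_curl3 {U : Set V3} (hu : ContDiffOn ℝ 2 u U) (hU : IsOpen U)
    (hx : x ∈ U) : DifferentiableAt ℝ (curl3 u) x :=
  (contDiffOn_curl3 hU hu).differentiableAt_of_isOpen one_ne_zero hU hx

end Curl

section Cross

lemma cross_smul_smul (a a' : ℂ) (p p' : C3) :
    cross (a • p) (a' • p') = (a * a') • cross p p' := by
  ext i; fin_cases i <;> simp [cross] <;> ring

lemma cross_stdC_two_star (p : C3) : cross (stdC 2) (star p) = star (cross (stdC 2) p) := by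
  ext i; fin_cases i <;> simp [cross, stdC]

variable {p p' : C3}

lemma cross_apply_two_eq_zero_left (hp : cross (stdC 2) p = 0) : cross p p' 2 = 0 := by
  have h0 := congrFun hp 1
  have h1 := congrFun hp 0
  simp_all [cross, stdC]

lemma cross_apply_two_eq_zero_right (hp' : cross (stdC 2) p' = 0) : cross p p' 2 = 0 := by
  have h0 := congrFun hp' 1
  have h1 := congrFun hp' 0
  simp_all [cross, stdC]

lemma DifferentiableAt.cross {u w : V3 → C3} {x : V3} (hu : DifferentiableAt ℝ u x)
    (hw : DifferentiableAt ℝ w x) : DifferentiableAt ℝ (fun y => cross (u y) (w y)) x := by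
  have hu' := differentiableAt_pi.1 hu
  have hw' := differentiableAt_pi.1 hw
  refine differentiableAt_pi.2 fun i => ?_
  fin_cases i <;> simp [_root_.cross] <;> fun_prop

lemma ContinuousOn.cross {u w : V3 → C3} {s : Set V3} (hu : ContinuousOn u s)
    (hw : ContinuousOn w s) : ContinuousOn (fun y => cross (u y) (w y)) s := by
  have hu' := continuousOn_pi.1 hu
  have hw' := continuousOn_pi.1 hw
  refine continuousOn_pi.2 fun i => ?_
  fin_cases i <;> simp [_root_.cross] <;> fun_prop

end Cross

lemma div3_eq_sum (u : V3 → C3) :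
    div3 u = fun x => ∑ i, fderiv ℝ (fun y => u y i) x (Pi.single i 1) := by
  ext x; simp [div3, pd, Fin.sum_univ_three, stdR_eq_single]

section Divergence

variable {u w : V3 → C3} {x : V3}

lemma div3_sub (hu : DifferentiableAt ℝ u x) (hw : DifferentiableAt ℝ w x) :
    div3 (fun y => u y - w y) x = div3 u x - div3 w x := by
  have hu' := differentiableAt_pi.1 hu
  have hw' := differentiableAt_pi.1 hw
  simp only [div3, Pi.sub_apply, pd_sub _ (hu' _) (hw' _)]
  ring

lemma div3_cross (hu : DifferentiableAt ℝ u x) (hw : DifferentiableAt ℝ w x) :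
    div3 (fun y => cross (u y) (w y)) x = cdot (curl3 u x) (w x) - cdot (u x) (curl3 w x) := by
  have hu' := differentiableAt_pi.1 hu
  have hw' := differentiableAt_pi.1 hw
  simp only [div3, cross, cdot, curl3]
  simp (disch := fun_prop) only [Matrix.cons_val, pd_sub, pd_mul]
  ring

end Divergence

def greenField (u w : V3 → C3) (y : V3) : C3 :=
  cross (u y) (curl3 w y) - cross (w y) (curl3 u y)

section GreenField

variable {u w : V3 → C3} {x : V3}

lemma div3_greenField (hu : DifferentiableAt ℝ u x) (hw : DifferentiableAt ℝ w x)
    (hcu : DifferentiableAt ℝ (curl3 u) x) (hcw : DifferentiableAt ℝ (curl3 w) x) :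
    div3 (greenField u w) x = cdot (w x) (curl3 (curl3 u) x) - cdot (u x) (curl3 (curl3 w) x) := by
  unfold greenField
  rw [div3_sub (hu.cross hcw) (hw.cross hcu), div3_cross hu hcw, div3_cross hw hcu]
  simp only [cdot]
  ring

lemma div3_greenField_of_curl3_curl3 {U : Set V3} {κ : ℂ} {f : C3} (hU : IsOpen U)
    (hu : ContDiffOn ℝ 2 u U) (hw : ContDiffOn ℝ 2 w U) (hx : x ∈ U)
    (hccu : curl3 (curl3 u) x = f + κ • u x) (hccw : curl3 (curl3 w) x = κ • w x) :
    div3 (greenField u w) x = cdot f (w x) := by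
  rw [div3_greenField (hu.differentiableAt_of_isOpen two_ne_zero hU hx)
    (hw.differentiableAt_of_isOpen two_ne_zero hU hx) (hu.differentiableAt_curl3 hU hx)
    (hw.differentiableAt_curl3 hU hx), hccu, hccw]
  simp only [cdot, Pi.add_apply, Pi.smul_apply, smul_eq_mul]
  ring

lemma differentiableAt_greenField {U : Set V3} (hU : IsOpen U) (hu : ContDiffOn ℝ 2 u U)
    (hw : ContDiffOn ℝ 2 w U) (hx : x ∈ U) : DifferentiableAt ℝ (greenField u w) x :=
  ((hu.differentiableAt_of_isOpen two_ne_zero hU hx).cross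
    (hw.differentiableAt_curl3 hU hx)).sub
    ((hw.differentiableAt_of_isOpen two_ne_zero hU hx).cross (hu.differentiableAt_curl3 hU hx))

lemma continuousOn_greenField {U : Set V3} (hU : IsOpen U) (hu : ContDiffOn ℝ 2 u U)
    (hw : ContDiffOn ℝ 2 w U) : ContinuousOn (greenField u w) U :=
  (hu.continuousOn.cross (contDiffOn_curl3 hU hw).continuousOn).sub
    (hw.continuousOn.cross (contDiffOn_curl3 hU hu).continuousOn)

lemma greenField_add_of_eventuallyEq {v : V3} {a a' : ℂ}
    (hu : (fun y => u (y + v)) =ᶠ[𝓝 x] fun y => a • u y)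
    (hw : (fun y => w (y + v)) =ᶠ[𝓝 x] fun y => a' • w y)
    (hud : DifferentiableAt ℝ u x) (hwd : DifferentiableAt ℝ w x) :
    greenField u w (x + v) = (a * a') • greenField u w x := by
  have hcu : curl3 u (x + v) = a • curl3 u x := by
    rw [← curl3_comp_add_right, curl3_congr hu, curl3_const_smul a hud]
  have hcw : curl3 w (x + v) = a' • curl3 w x := by
    rw [← curl3_comp_add_right, curl3_congr hw, curl3_const_smul a' hwd]
  have hux : u (x + v) = a • u x := hu.self_of_nhds
  have hwx : w (x + v) = a' • w x := hw.self_of_nhds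
  rw [greenField, greenField, hcu, hcw, hux, hwx, cross_smul_smul, cross_smul_smul,
    mul_comm a' a, smul_sub]

lemma greenField_apply_two_eq_zero (hu : cross (stdC 2) (u x) = 0)
    (h : cross (stdC 2) (w x) = 0 ∨ cross (stdC 2) (curl3 u x) = 0) :
    greenField u w x 2 = 0 := by
  rw [greenField, Pi.sub_apply, cross_apply_two_eq_zero_left hu, zero_sub, neg_eq_zero]
  rcases h with h | h
  · exact cross_apply_two_eq_zero_left h
  · exact cross_apply_two_eq_zero_right h

end GreenField

section Slab

variable {c b : ℝ}

lemma measurableSet_slabCell : MeasurableSet (slabCell c b) := by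
  unfold slabCell; measurability

lemma integrableOn_slabCell_of_continuousOn {f : V3 → ℂ} (hf : ContinuousOn f (slab c b)) :
    IntegrableOn f (slabCell c b) := by
  have hcell : slabCell c b ⊆ Icc ![0, 0, c] ![2 * π, 2 * π, b] := fun x ⟨h0, h1, h2⟩ => by
    refine ⟨fun i => ?_, fun i => ?_⟩ <;> fin_cases i <;>
      simp [h0.1.le, h0.2.le, h1.1.le, h1.2.le, h2.1.le, h2.2.le]
  have hIcc : Icc ![0, 0, c] ![2 * π, 2 * π, b] ⊆ slab c b := fun x hx => ⟨hx.1 2, hx.2 2⟩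
  exact ((hf.mono hIcc).integrableOn_compact isCompact_Icc).mono_set hcell

lemma eventuallyEq_of_forall_slab {u : V3 → C3} {v x : V3} {a : ℂ}
    (h : ∀ y ∈ slab c b, u (y + v) = a • u y) (hx : x 2 ∈ Ioo c b) :
    (fun y => u (y + v)) =ᶠ[𝓝 x] fun y => a • u y :=
  Filter.eventually_of_mem ((isOpen_Ioo.preimage (continuous_apply 2)).mem_nhds hx)
    fun y hy => h y ⟨hy.1.le, hy.2.le⟩

lemma exp_two_pi_mul_I_mul_conj (t : ℝ) :
    Complex.exp (2 * π * t * Complex.I) * starRingEnd ℂ (Complex.exp (2 * π * t * Complex.I)) =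
      1 := by
  rw [← Complex.exp_conj, ← Complex.exp_add]
  simp [Complex.conj_ofReal, map_ofNat]

lemma greenField_star_add_eq {u w : V3 → C3} {v x : V3} {a : ℂ}
    (ha : a * starRingEnd ℂ a = 1) (hu : ∀ y ∈ slab c b, u (y + v) = a • u y)
    (hw : ∀ y ∈ slab c b, w (y + v) = a • w y) (hud : DifferentiableAt ℝ u x)
    (hwd : DifferentiableAt ℝ (fun y => star (w y)) x) (hx : x 2 ∈ Ioo c b) :
    greenField u (fun y => star (w y)) (x + v) = greenField u (fun y => star (w y)) x := by
  have hw' : ∀ y ∈ slab c b, star (w (y + v)) = starRingEnd ℂ a • star (w y) :=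
    fun y hy => by rw [hw y hy, star_smul, Complex.star_def]
  rw [greenField_add_of_eventuallyEq (eventuallyEq_of_forall_slab hu hx)
    (eventuallyEq_of_forall_slab hw' hx) hud hwd, ha, one_smul]

lemma greenField_star_add_two_pi_smul {α : ℝ × ℝ} {u w : V3 → C3} {x : V3}
    (hu : QPOn α (slab c b) u) (hw : QPOn α (slab c b) w) (hud : DifferentiableAt ℝ u x)
    (hwd : DifferentiableAt ℝ (fun y => star (w y)) x) (hx : x 2 ∈ Ioo c b)
    (j : Fin 3) (hj : j ≠ 2) :
    greenField u (fun y => star (w y)) (x + (2 * π) • stdR j) =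
      greenField u (fun y => star (w y)) x := by
  fin_cases j
  · exact greenField_star_add_eq (exp_two_pi_mul_I_mul_conj α.1) (fun y hy => (hu y hy).1)
      (fun y hy => (hw y hy).1) hud hwd hx
  · exact greenField_star_add_eq (exp_two_pi_mul_I_mul_conj α.2) (fun y hy => (hu y hy).2)
      (fun y hy => (hw y hy).2) hud hwd hx
  · exact absurd rfl hj

lemma setIntegral_insertNth_eq_of_periodic {W : V3 → C3} {lo hi : V3} {j : Fin 3} (hj : j ≠ 2)
    (hlohi : hi j = lo j + 2 * π)
    (hper : ∀ x : V3, x 2 ∈ Ioo (lo 2) (hi 2) → W (x + (2 * π) • stdR j) = W x) :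
    ∫ y in Icc (lo ∘ j.succAbove) (hi ∘ j.succAbove), W (j.insertNth (hi j) y) j =
      ∫ y in Icc (lo ∘ j.succAbove) (hi ∘ j.succAbove), W (j.insertNth (lo j) y) j := by
  -- on the open face the point lies in the open slab, where `hper` applies
  have hface : (univ.pi fun i => Ioo ((lo ∘ j.succAbove) i) ((hi ∘ j.succAbove) i))
      =ᵐ[volume] Icc (lo ∘ j.succAbove) (hi ∘ j.succAbove) := Measure.univ_pi_Ioo_ae_eq_Icc
  rw [← setIntegral_congr_set hface, ← setIntegral_congr_set hface]
  refine setIntegral_congr_fun (MeasurableSet.univ_pi fun _ => measurableSet_Ioo) fun y hy => ?_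
  have hshift : j.insertNth (hi j) y = j.insertNth (lo j) y + (2 * π) • stdR j := by
    ext k
    rcases j.eq_self_or_eq_succAbove k with rfl | ⟨k, rfl⟩
    · simp [hlohi, stdR]
    · simp [stdR, Fin.succAbove_ne]
  obtain ⟨k, hk⟩ := Fin.exists_succAbove_eq (Ne.symm hj)
  have hmem : (j.insertNth (lo j) y : V3) 2 ∈ Ioo (lo 2) (hi 2) := by
    simpa [← hk] using hy k trivial
  rw [hshift, hper _ hmem]

lemma integral_slabCell_eq_zero_of_eq_div3 {W : V3 → C3} {f : V3 → ℂ} (hcb : c ≤ b)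
    (hf : ContinuousOn f (slab c b)) (hdiv : ∀ x ∈ slabCell c b, div3 W x = f x)
    (hc : ContinuousOn W (slab c b))
    (hd : ∀ x : V3, x 2 ∈ Ioo c b → DifferentiableAt ℝ W x)
    (hper : ∀ j : Fin 3, j ≠ 2 → ∀ x : V3, x 2 ∈ Ioo c b →
      W (x + (2 * π) • stdR j) = W x)
    (hbdry : ∀ x : V3, x 2 = c ∨ x 2 = b → W x 2 = 0) :
    ∫ x in slabCell c b, f x = 0 := by
  have hint : IntegrableOn (div3 W) (slabCell c b) :=
    (integrableOn_slabCell_of_continuousOn hf).congr_fun (fun x hx => (hdiv x hx).symm)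
      measurableSet_slabCell
  set lo : V3 := ![0, 0, c]
  set hi : V3 := ![2 * π, 2 * π, b]
  have hle : lo ≤ hi := by
    intro i; fin_cases i <;> simp [lo, hi, hcb, pi_pos.le]
  have hcell : slabCell c b = univ.pi fun i => Ioo (lo i) (hi i) := by
    ext x; simp [slabCell, lo, hi, Fin.forall_fin_succ]
  have hae : slabCell c b =ᵐ[volume] Icc lo hi := hcell ▸ Measure.univ_pi_Ioo_ae_eq_Icc
  have key := integral_divergence_of_hasFDerivAt_off_countable' lo hi hle (fun i x => W x i)
    (fun i x => fderiv ℝ (fun y => W y i) x) ∅ countable_empty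
    (fun i => (continuousOn_pi.1 hc i).mono fun x hx => ⟨hx.1 2, hx.2 2⟩)
    (fun x hx i => (differentiableAt_pi.1 (hd x (hx.1 2 trivial)) i).hasFDerivAt)
    (div3_eq_sum W ▸ hint.congr_set_ae hae.symm)
  calc ∫ x in slabCell c b, f x
      = ∫ x in slabCell c b, div3 W x := (setIntegral_congr_fun measurableSet_slabCell hdiv).symm
    _ = ∫ x in Icc lo hi, ∑ i, fderiv ℝ (fun y => W y i) x (Pi.single i 1) := by
        rw [setIntegral_congr_set hae]; simp only [div3_eq_sum]
    _ = _ := key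
    _ = 0 := by
        have hside (j : Fin 3) (hj : j ≠ 2) := setIntegral_insertNth_eq_of_periodic hj
          (lo := lo) (hi := hi) (by fin_cases j <;> simp_all [lo, hi]) (hper j hj)
        rw [Fin.sum_univ_three, hside 0 (by decide), hside 1 (by decide)]
        simp [hbdry, lo, hi]

end Slab

theorem statement12_general (k₀ : ℝ) (α : ℝ × ℝ) (b c : ℝ) (hcb : c < b)
    (q : V3 → ℂ)
    (F : V3 → C3) (hF : ContinuousOn F (slab c b))
    (E E₂ : V3 → C3)
    (hEreg : ∃ U : Set V3, IsOpen U ∧ slab c b ⊆ U ∧ ContDiffOn ℝ 2 E U)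
    (hE₂reg : ∃ U : Set V3, IsOpen U ∧ slab c b ⊆ U ∧ ContDiffOn ℝ 2 E₂ U)
    (hEqp : QPOn α (slab c b) E) (hE₂qp : QPOn α (slab c b) E₂)
    (hEeq : ∀ x : V3, c < x 2 → x 2 < b →
      curl3 (curl3 E) x - ((k₀ ^ 2 : ℂ) * q x) • E x = F x)
    (hE₂eq : ∀ x : V3, c < x 2 → x 2 < b →
      curl3 (curl3 E₂) x - ((k₀ ^ 2 : ℂ) * (starRingEnd ℂ) (q x)) • E₂ x = 0)
    (htop : ∀ x : V3, x 2 = b → cross (stdC 2) (E x) = 0)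
    (htopc : ∀ x : V3, x 2 = b → cross (stdC 2) (curl3 E x) = 0)
    (hbot : ∀ x : V3, x 2 = c → cross (stdC 2) (E x) = 0)
    (hbot₂ : ∀ x : V3, x 2 = c → cross (stdC 2) (E₂ x) = 0) :
    (∫ x in slabCell c b, cdot (F x) (fun i => (starRingEnd ℂ) (E₂ x i))) = 0 := by
  obtain ⟨U₁, hU₁, hsU₁, hE⟩ := hEreg
  obtain ⟨U₂, hU₂, hsU₂, hE₂⟩ := hE₂reg
  set G : V3 → C3 := fun y => star (E₂ y)
  have hU : IsOpen (U₁ ∩ U₂) := hU₁.inter hU₂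
  have hsU : slab c b ⊆ U₁ ∩ U₂ := subset_inter hsU₁ hsU₂
  have hEU : ContDiffOn ℝ 2 E (U₁ ∩ U₂) := hE.mono inter_subset_left
  have hGU : ContDiffOn ℝ 2 G (U₁ ∩ U₂) :=
    (starL' ℝ).contDiff.comp_contDiffOn (hE₂.mono inter_subset_right)
  have hmem {x : V3} (hx : x 2 ∈ Ioo c b) : x ∈ U₁ ∩ U₂ := hsU ⟨hx.1.le, hx.2.le⟩
  have hdiv (x : V3) (hx : x ∈ slabCell c b) : div3 (greenField E G) x = cdot (F x) (G x) := by
    obtain ⟨-, -, hc, hb⟩ := hx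
    refine div3_greenField_of_curl3_curl3 hU hEU hGU (hmem ⟨hc, hb⟩)
      (by rw [← hEeq x hc hb, sub_add_cancel]) ?_
    rw [curl3_star, curl3_star]
    simp [sub_eq_zero.1 (hE₂eq x hc hb), G, star_smul, Complex.conj_ofReal]
  have hFG : ContinuousOn (fun x => cdot (F x) (G x)) (slab c b) := by
    have hFc := continuousOn_pi.1 hF
    have hGc := continuousOn_pi.1 (hGU.continuousOn.mono hsU)
    simp only [cdot]; fun_prop
  change ∫ x in slabCell c b, cdot (F x) (G x) = 0
  refine integral_slabCell_eq_zero_of_eq_div3 hcb.le hFG hdiv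
    ((continuousOn_greenField hU hEU hGU).mono hsU)
    (fun x hx => differentiableAt_greenField hU hEU hGU (hmem hx))
    (fun j hj x hx => greenField_star_add_two_pi_smul hEqp hE₂qp
      (hEU.differentiableAt_of_isOpen two_ne_zero hU (hmem hx))
      (hGU.differentiableAt_of_isOpen two_ne_zero hU (hmem hx)) hx j hj) ?_
  rintro x (hx | hx)
  · exact greenField_apply_two_eq_zero (hbot x hx)
      (.inl (by rw [cross_stdC_two_star, hbot₂ x hx, star_zero]))
  · exact greenField_apply_two_eq_zero (htop x hx) (.inr (htopc x hx))

/-- the orthogonality relation derived by Green's vector formula in the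
proof of the uniqueness theorem for the refractive index:
`∫_Q F · conj E₂ dx = 0`. -/
theorem statement12 (k₀ : ℝ) (hk₀ : 0 < k₀) (α : ℝ × ℝ) (b c : ℝ) (hcb : c < b)
    (q : V3 → ℂ) (hq : ContinuousOn q (slab c b))
    (F : V3 → C3) (hF : ContinuousOn F (slab c b))
    (E E₂ : V3 → C3)
    (hEreg : ∃ U : Set V3, IsOpen U ∧ slab c b ⊆ U ∧ ContDiffOn ℝ 2 E U)
    (hE₂reg : ∃ U : Set V3, IsOpen U ∧ slab c b ⊆ U ∧ ContDiffOn ℝ 2 E₂ U)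
    (hEqp : QPOn α (slab c b) E) (hE₂qp : QPOn α (slab c b) E₂)
    (hEeq : ∀ x : V3, c < x 2 → x 2 < b →
      curl3 (curl3 E) x - ((k₀ ^ 2 : ℂ) * q x) • E x = F x)
    (hE₂eq : ∀ x : V3, c < x 2 → x 2 < b →
      curl3 (curl3 E₂) x - ((k₀ ^ 2 : ℂ) * (starRingEnd ℂ) (q x)) • E₂ x = 0)
    (htop : ∀ x : V3, x 2 = b → cross (stdC 2) (E x) = 0)
    (htopc : ∀ x : V3, x 2 = b → cross (stdC 2) (curl3 E x) = 0)
    (hbot : ∀ x : V3, x 2 = c → cross (stdC 2) (E x) = 0)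
    (hbot₂ : ∀ x : V3, x 2 = c → cross (stdC 2) (E₂ x) = 0) :
    (∫ x in slabCell c b, cdot (F x) (fun i => (starRingEnd ℂ) (E₂ x i))) = 0 :=
  statement12_general k₀ α b c hcb q F hF E E₂ hEreg hE₂reg hEqp hE₂qp hEeq hE₂eq htop htopc hbot
    hbot₂
end
end

section
/- Let m ∈ ℤ² with β_m ≠ 0 and let p_m ∈ ℂ³ with p_m ≠ 0. Then there do not exist H ∈ ℝ and coefficients (E_n)_{n∈ℤ²} ⊆ ℂ³ with Σ_n |E_n| e^{−Im(β_n) H'} < ∞ for every H' > H such that p_m e^{i(α_m·x − β_m x₃)} = Σ_{n∈ℤ²} E_n e^{i(α_n·x + β_n x₃)} for all x with x₃ > H. In other words, a nonzero downward-propagating (or downward-evanescent) plane-wave mode cannot coincide on any upper half-space with a convergent outgoing Rayleigh series. (This fact yields the contradiction concluding the proof of the uniqueness theorem for the grating profile: the total field E^i + E^s cannot vanish identically in Ω₀.) -/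
noncomputable section

open MeasureTheory Real Set

/-!
On the vertical line `x = (0, 0, s)` the identity reads `e^{-iβ_m s} p_m = ∑ e^{iβ_n s} E_n`.
Multiplying by `e^{iβ_m s}` gives `p_m = ∑ e^{i(β_m + β_n) s} E_n`. All `β` lie in the closed
first quadrant, so every exponent `i(β_m + β_n)` has nonpositive real part and modulus at least
`|β_m| > 0`. Averaging over `s ∈ [a, a + T]` leaves `p_m` on the left, while the averages of the
terms on the right are bounded by a summable sequence times `1 / T`; hence `p_m = 0`.
-/

open Complex

lemma Complex.norm_le_norm_add_of_re_nonneg_of_im_nonneg {z w : ℂ} (hz_re : 0 ≤ z.re)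
    (hz_im : 0 ≤ z.im) (hw_re : 0 ≤ w.re) (hw_im : 0 ≤ w.im) : ‖z‖ ≤ ‖z + w‖ := by
  rw [← sq_le_sq₀ (norm_nonneg _) (norm_nonneg _), Complex.sq_norm, Complex.sq_norm,
    normSq_apply, normSq_apply, add_re, add_im]
  nlinarith

lemma norm_exp_mul_le_one {c : ℂ} (hc : c.re ≤ 0) {t : ℝ} (ht : 0 ≤ t) :
    ‖exp (c * t)‖ ≤ 1 := by
  rw [norm_exp, Real.exp_le_one_iff, re_mul_ofReal]
  exact mul_nonpos_of_nonpos_of_nonneg hc ht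

section

variable {E : Type*} [NormedAddCommGroup E] [NormedSpace ℂ E] [CompleteSpace E]

lemma norm_integral_exp_mul_smul_le {c : ℂ} (hc₀ : c ≠ 0) (hc : c.re ≤ 0) {T : ℝ}
    (hT : 0 ≤ T) (w : E) : ‖∫ t in (0 : ℝ)..T, exp (c * t) • w‖ ≤ 2 / ‖c‖ * ‖w‖ := by
  rw [intervalIntegral.integral_smul_const, integral_exp_mul_complex hc₀, norm_smul, norm_div]
  gcongr
  calc ‖exp (c * T) - exp (c * (0 : ℝ))‖ ≤ ‖exp (c * T)‖ + ‖exp (c * (0 : ℝ))‖ :=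
        norm_sub_le _ _
    _ ≤ 1 + 1 := add_le_add (norm_exp_mul_le_one hc hT) (norm_exp_mul_le_one hc le_rfl)
    _ = 2 := by norm_num

lemma eq_zero_of_forall_eq_tsum_exp_mul_smul {ι : Type*} [Countable ι] {c : ι → ℂ} {δ : ℝ}
    (hδ : 0 < δ) (hc : ∀ n, δ ≤ ‖c n‖) (hc_re : ∀ n, (c n).re ≤ 0) {w : ι → E}
    (hw : Summable fun n => ‖w n‖) {v : E}
    (hv : ∀ t : ℝ, 0 ≤ t → v = ∑' n, exp (c n * t) • w n) : v = 0 := by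
  have hc₀ n : c n ≠ 0 := norm_pos_iff.mp (hδ.trans_le (hc n))
  have hterm n {t : ℝ} (ht : 0 ≤ t) : ‖exp (c n * t) • w n‖ ≤ ‖w n‖ := by
    rw [norm_smul]
    exact mul_le_of_le_one_left (norm_nonneg _) (norm_exp_mul_le_one (hc_re n) ht)
  have hmean : ∀ T : ℝ, 0 ≤ T → T * ‖v‖ ≤ 2 / δ * ∑' n, ‖w n‖ := by
    intro T hT
    have hsum : HasSum (fun n => ∫ t in (0 : ℝ)..T, exp (c n * t) • w n)
        (∫ _ in (0 : ℝ)..T, v) := by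
      refine intervalIntegral.hasSum_integral_of_dominated_convergence (fun n _ => ‖w n‖)
        (fun n => by fun_prop) ?_ ?_ intervalIntegrable_const ?_
      · exact fun n => Filter.Eventually.of_forall fun t ht =>
          hterm n (uIoc_of_le hT ▸ ht).1.le
      · exact Filter.Eventually.of_forall fun _ _ => hw
      · refine Filter.Eventually.of_forall fun t ht => ?_
        have ht : 0 ≤ t := (uIoc_of_le hT ▸ ht).1.le
        rw [hv t ht]
        exact (Summable.of_norm_bounded hw fun n => hterm n ht).hasSum
    rw [intervalIntegral.integral_const, sub_zero] at hsum
    have := hsum.norm_le_of_bounded (hw.hasSum.mul_left (2 / δ)) fun n =>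
      (norm_integral_exp_mul_smul_le (hc₀ n) (hc_re n) hT (w n)).trans
        (by gcongr; exact hc n)
    rwa [norm_smul, Real.norm_of_nonneg hT] at this
  set C := 2 / δ * ∑' n, ‖w n‖
  by_contra hv₀
  have hpos : 0 < ‖v‖ := norm_pos_iff.mpr hv₀
  have := hmean ((C + 1) / ‖v‖) (by positivity)
  rw [div_mul_cancel₀ _ hpos.ne'] at this
  linarith

lemma eq_zero_of_forall_exp_smul_eq_tsum {ι : Type*} [Countable ι] {b : ℂ} (hb : b ≠ 0)
    (hb_re : 0 ≤ b.re) (hb_im : 0 ≤ b.im) {β : ι → ℂ} (hβ_re : ∀ n, 0 ≤ (β n).re)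
    (hβ_im : ∀ n, 0 ≤ (β n).im) {w : ι → E} {H : ℝ}
    (hw : ∀ s > H, Summable fun n => ‖w n‖ * Real.exp (-(β n).im * s)) {v : E}
    (hv : ∀ s : ℝ, H < s → exp (-(I * b * s)) • v = ∑' n, exp (I * β n * s) • w n) :
    v = 0 := by
  set a := max H 0 + 1
  have ha₀ : 0 ≤ a := by positivity
  have haH : H < a := by simp only [a]; linarith [le_max_left H 0]
  set c : ι → ℂ := fun n => I * (b + β n)
  have hc_re n : (c n).re = -(b.im + (β n).im) := by simp [c]
  refine eq_zero_of_forall_eq_tsum_exp_mul_smul (c := c) (w := fun n => exp (c n * a) • w n)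
    (norm_pos_iff.mpr hb) (fun n => ?_) (fun n => ?_) ?_ (fun t ht => ?_)
  · simpa [c] using
      Complex.norm_le_norm_add_of_re_nonneg_of_im_nonneg hb_re hb_im (hβ_re n) (hβ_im n)
  · rw [hc_re]
    linarith [hβ_im n]
  · refine (hw a haH).of_nonneg_of_le (fun n => norm_nonneg _) fun n => ?_
    rw [norm_smul, norm_exp, re_mul_ofReal, hc_re, mul_comm]
    gcongr
    nlinarith [hβ_im n]
  · have hs := hv (a + t) (by linarith)
    rw [← eq_inv_smul_iff₀ (Complex.exp_ne_zero _), ← Complex.exp_neg, neg_neg,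
      ← tsum_const_smul''] at hs
    rw [hs]
    refine tsum_congr fun n => ?_
    rw [smul_smul, smul_smul, ← Complex.exp_add, ← Complex.exp_add]
    congr 2
    push_cast
    ring

end

lemma betaN_re_nonneg (k₀ : ℝ) (α : ℝ × ℝ) (n : ℤ × ℤ) : 0 ≤ (betaN k₀ α n).re := by
  unfold betaN
  split_ifs <;> simp [Real.sqrt_nonneg]

lemma betaN_im_nonneg (k₀ : ℝ) (α : ℝ × ℝ) (n : ℤ × ℤ) : 0 ≤ (betaN k₀ α n).im := by
  unfold betaN
  split_ifs <;> simp [Real.sqrt_nonneg]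

lemma rdot_alphaN_pt3_zero (α : ℝ × ℝ) (n : ℤ × ℤ) (s : ℝ) :
    rdot (alphaN α n) (pt3 0 s) = 0 := by
  simp [rdot, alphaN, pt3]

lemma rayleighSeries_pt3_zero (k₀ : ℝ) (α : ℝ × ℝ) (En : ℤ × ℤ → C3) (s : ℝ) :
    rayleighSeries k₀ α En (pt3 0 s) = ∑' n, exp (I * betaN k₀ α n * s) • En n := by
  simp only [rayleighSeries, rdot_alphaN_pt3_zero, Complex.ofReal_zero, zero_add, mul_assoc]
  rfl

theorem statement14_general (k₀ : ℝ) (α : ℝ × ℝ) (m : ℤ × ℤ)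
    (hβm : betaN k₀ α m ≠ 0) (pm : C3) (hpm : pm ≠ 0) :
    ¬ ∃ (H : ℝ) (En : ℤ × ℤ → C3),
      (∀ H' > H, Summable fun n : ℤ × ℤ =>
        ‖En n‖ * Real.exp (-(betaN k₀ α n).im * H')) ∧
      (∀ x : V3, H < x 2 →
        Complex.exp (Complex.I *
            (((rdot (alphaN α m) x : ℝ) : ℂ) - betaN k₀ α m * ((x 2 : ℝ) : ℂ))) • pm
          = rayleighSeries k₀ α En x) := by
  rintro ⟨H, En, hsum, heq⟩
  refine hpm <| eq_zero_of_forall_exp_smul_eq_tsum hβm (betaN_re_nonneg k₀ α m)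
    (betaN_im_nonneg k₀ α m) (betaN_re_nonneg k₀ α) (betaN_im_nonneg k₀ α) hsum fun s hs => ?_
  rw [← rayleighSeries_pt3_zero, ← heq (pt3 0 s) hs, rdot_alphaN_pt3_zero]
  congr 2
  simp [pt3]
  ring

/-- a nonzero downward-propagating (or downward-evanescent) plane-wave
mode `p_m e^{i(α_m·x - β_m x₃)}` cannot coincide on any upper half-space with a
convergent outgoing Rayleigh series. -/
theorem statement14 (k₀ : ℝ) (hk₀ : 0 < k₀) (α : ℝ × ℝ) (m : ℤ × ℤ)
    (hβm : betaN k₀ α m ≠ 0) (pm : C3) (hpm : pm ≠ 0) :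
    ¬ ∃ (H : ℝ) (En : ℤ × ℤ → C3),
      (∀ H' > H, Summable fun n : ℤ × ℤ =>
        ‖En n‖ * Real.exp (-(betaN k₀ α n).im * H')) ∧
      (∀ x : V3, H < x 2 →
        Complex.exp (Complex.I *
            (((rdot (alphaN α m) x : ℝ) : ℂ) - betaN k₀ α m * ((x 2 : ℝ) : ℂ))) • pm
          = rayleighSeries k₀ α En x) :=
  statement14_general k₀ α m hβm pm hpm
end
end
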